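/- Let ξ be irrational with convergents p_k/q_k, and y = (y₁,y₂) with y₂ ≠ 0, rational slope a/b in lowest terms with |a| ≤ b. Let k be a positive integer with q_k ≥ 12b/|y₂|. Then every γ ∈ SL(2,ℤ) with |γ| ≤ (|y₂|/4) q_k q_{k+1} satisfies |γ(ξ,1)ᵀ − y| ≥ 1/(4 b q_k). -/

import Mathlib

open Matrix MeasureTheory

/-- Denominator `q k` of the `k`-th convergent of the continued fraction of `ξ`. -/
noncomputable def qden (ξ : ℝ) (k : ℕ) : ℝ := (GenContFract.of ξ).dens k

/-- Numerator `p k` of the `k`-th convergent of the continued fraction of `ξ`. -/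
noncomputable def pnum (ξ : ℝ) (k : ℕ) : ℝ := (GenContFract.of ξ).nums k

/-- Action of an integer matrix on `ℝ²` by left multiplication. -/
noncomputable def act (g : Matrix (Fin 2) (Fin 2) ℤ) (x : Fin 2 → ℝ) : Fin 2 → ℝ :=
  (g.map (Int.cast : ℤ → ℝ)).mulVec x

/-- Sup norm of an integer `2 × 2` matrix. -/
noncomputable def mnorm (g : Matrix (Fin 2) (Fin 2) ℤ) : ℝ :=
  max (max |(g 0 0 : ℝ)| |(g 0 1 : ℝ)|) (max |(g 1 0 : ℝ)| |(g 1 1 : ℝ)|)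

/-- Sup norm on `ℝ²`. -/
noncomputable def vnorm (v : Fin 2 → ℝ) : ℝ := max |v 0| |v 1|

/-- The set of exponents `w` such that `|v α + u| ≤ |v| ^ (-w)` has infinitely many
integer solutions `(v, u)`; its supremum is the irrationality measure `ω(α)`. -/
def omegaSet (α : ℝ) : Set ℝ :=
  {w : ℝ | {p : ℤ × ℤ | |(p.1 : ℝ) * α + (p.2 : ℝ)| ≤ |(p.1 : ℝ)| ^ (-w)}.Infinite}

/-- The set of exponents `μ` such that `|γ x - y| ≤ |γ| ^ (-μ)` for infinitely many
`γ ∈ SL(2, ℤ)`; its supremum is `μ(x, y)`. -/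
def muSet (x y : Fin 2 → ℝ) : Set ℝ :=
  {μ : ℝ | {γ : Matrix (Fin 2) (Fin 2) ℤ |
    γ.det = 1 ∧ vnorm (act γ x - y) ≤ mnorm γ ^ (-μ)}.Infinite}

/-- The set of exponents `μ` such that for all sufficiently large `T` there is
`γ ∈ SL(2, ℤ)` with `|γ| ≤ T` and `|γ x - y| ≤ T ^ (-μ)`; its supremum is `μ̂(x, y)`. -/
def muHatSet (x y : Fin 2 → ℝ) : Set ℝ :=
  {μ : ℝ | ∃ T₀ : ℝ, ∀ T : ℝ, T₀ ≤ T → ∃ γ : Matrix (Fin 2) (Fin 2) ℤ,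
    γ.det = 1 ∧ mnorm γ ≤ T ∧ vnorm (act γ x - y) ≤ T ^ (-μ)}

/-!
Write `δ = |γ (ξ, 1) - y|` and `(P, Q) = (b, -a) γ`. Since `(b, -a)` is orthogonal to `y`,
`P ξ + Q = (b, -a) · (γ (ξ, 1) - y)` is at most `2 b δ`, and since `det γ = 1`,
`y₂ P = b (1 + O(|γ| δ))`. Suppose `δ < 1 / (4 b q_k)`. Then `|P ξ + Q| < 1 / (2 q_k)`, so the
best approximation property of the convergents forces `q_k ≤ |P|`, while the bound on `|γ|`
forces `3 |P| < q_{k+1}`. Expanding `(P, Q)` in the basis `(q_k, -p_k), (q_{k+1}, -p_{k+1})`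
of `ℤ²` and using that `q_n ξ - p_n` alternates in sign, the only such pairs are the nonzero
multiples of `(q_k, -p_k)`. For those, `det γ = 1` gives `|C p_k + D q_k| ≤ b` for the second
row `(C, D)` of `γ`, which is incompatible with `C ξ + D` being within `δ` of `y₂`, because
`12 b ≤ q_k |y₂|` and `|C| |q_k ξ - p_k| ≤ |γ| / q_{k+1} ≤ q_k |y₂| / 4`.
-/

section OrderedRing

variable {α : Type*} [CommRing α] [LinearOrder α] [IsStrictOrderedRing α]

theorem mul_neg_of_abs_sub_eq_one {x y : α} (h : |x - y| = 1) (hx : |x| ≤ 1) (hy : |y| < 1)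
    (hy0 : y ≠ 0) : x * y < 0 := by
  rw [abs_le] at hx
  rw [abs_lt] at hy
  rcases lt_or_gt_of_ne hy0 with hy' | hy' <;>
  rcases abs_eq zero_le_one |>.1 h with h' | h' <;> nlinarith

theorem add_le_abs_mul_add_mul {u v : ℤ} {x y : α} (huv : 0 < u * v) (hx : 0 ≤ x)
    (hy : 0 ≤ y) : x + y ≤ |u * x + v * y| := by
  rcases mul_pos_iff.1 huv with ⟨hu, hv⟩ | ⟨hu, hv⟩
  · have hu' : (1 : α) ≤ u := mod_cast hu
    have hv' : (1 : α) ≤ v := mod_cast hv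
    exact le_abs.2 (Or.inl (by nlinarith))
  · have hu' : (u : α) ≤ -1 := by exact_mod_cast Int.le_sub_one_of_lt hu
    have hv' : (v : α) ≤ -1 := by exact_mod_cast Int.le_sub_one_of_lt hv
    exact le_abs.2 (Or.inr (by nlinarith))

theorem abs_le_abs_add_of_mul_nonneg {a b : α} (h : 0 ≤ a * b) : |a| ≤ |a + b| := by
  rw [(abs_add_eq_add_abs_iff a b).2 (mul_nonneg_iff.1 h)]
  exact le_add_of_nonneg_right (abs_nonneg b)

end OrderedRing

section ContinuedFraction

variable {ξ : ℝ}

theorem not_terminatedAt_of_irrational (hξ : Irrational ξ) (n : ℕ) :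
    ¬(GenContFract.of ξ).TerminatedAt n :=
  fun h ↦ by
    obtain ⟨q, hq⟩ := GenContFract.exists_rat_eq_of_terminates ⟨n, h⟩
    exact hξ ⟨q, hq.symm⟩

theorem exists_s_get?_eq_of_irrational (hξ : Irrational ξ) (n : ℕ) :
    ∃ z : ℤ, 1 ≤ z ∧ (GenContFract.of ξ).s.get? n = some ⟨1, z⟩ := by
  obtain ⟨⟨c, d⟩, hgp⟩ := Option.ne_none_iff_exists'.1
    ((GenContFract.terminatedAt_iff_s_none).not.1 (not_terminatedAt_of_irrational hξ n))
  obtain ⟨rfl, z, rfl⟩ := GenContFract.of_partNum_eq_one_and_exists_int_partDen_eq hgp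
  have hz : (1 : ℝ) ≤ z :=
    GenContFract.of_one_le_get?_partDen (GenContFract.partDen_eq_s_b hgp)
  exact ⟨z, mod_cast hz, hgp⟩

theorem qden_zero : qden ξ 0 = 1 := GenContFract.zeroth_den_eq_one

theorem qden_monotone : Monotone (qden ξ) :=
  monotone_nat_of_le_succ fun _ ↦ GenContFract.of_den_mono

theorem one_le_qden (n : ℕ) : 1 ≤ qden ξ n :=
  qden_zero (ξ := ξ) ▸ qden_monotone (Nat.zero_le n)

theorem qden_pos (n : ℕ) : 0 < qden ξ n := one_pos.trans_le (one_le_qden n)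

theorem qden_add_qden_succ_le (hξ : Irrational ξ) (n : ℕ) :
    qden ξ n + qden ξ (n + 1) ≤ qden ξ (n + 2) := by
  obtain ⟨z, hz, hs⟩ := exists_s_get?_eq_of_irrational hξ (n + 1)
  have h : qden ξ (n + 2) = z * qden ξ (n + 1) + 1 * qden ξ n :=
    GenContFract.dens_recurrence hs rfl rfl
  have hz' : (1 : ℝ) ≤ z := mod_cast hz
  nlinarith [qden_pos (ξ := ξ) (n + 1)]

theorem pnum_mem_bot_and_qden_mem_bot (hξ : Irrational ξ) (n : ℕ) :
    pnum ξ n ∈ (⊥ : Subring ℝ) ∧ qden ξ n ∈ (⊥ : Subring ℝ) := by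
  induction n using Nat.twoStepInduction with
  | zero =>
    exact ⟨Subring.mem_bot.2 ⟨⌊ξ⌋, rfl⟩,
      Subring.mem_bot.2 ⟨1, by simp [qden_zero]⟩⟩
  | one =>
    obtain ⟨z, -, hs⟩ := exists_s_get?_eq_of_irrational hξ 0
    refine ⟨Subring.mem_bot.2 ⟨z * ⌊ξ⌋ + 1, ?_⟩, Subring.mem_bot.2 ⟨z, ?_⟩⟩
    · simp [pnum, GenContFract.first_num_eq hs, GenContFract.of_h_eq_floor]
    · simp [qden, GenContFract.first_den_eq hs]
  | more n h₀ h₁ =>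
    obtain ⟨z, -, hs⟩ := exists_s_get?_eq_of_irrational hξ (n + 1)
    have hz : ((z : ℝ)) ∈ (⊥ : Subring ℝ) := Subring.mem_bot.2 ⟨z, rfl⟩
    constructor
    · rw [pnum, GenContFract.nums_recurrence hs rfl rfl]
      exact add_mem (mul_mem hz h₁.1) (mul_mem (one_mem _) h₀.1)
    · rw [qden, GenContFract.dens_recurrence hs rfl rfl]
      exact add_mem (mul_mem hz h₁.2) (mul_mem (one_mem _) h₀.2)

theorem pnum_mul_qden_succ_sub (hξ : Irrational ξ) (n : ℕ) :
    pnum ξ n * qden ξ (n + 1) - qden ξ n * pnum ξ (n + 1) = (-1) ^ (n + 1) :=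
  SimpContFract.determinant (s := ⟨_, GenContFract.of_isSimpContFract ξ⟩)
    (not_terminatedAt_of_irrational hξ n)

noncomputable def convErr (ξ : ℝ) (n : ℕ) : ℝ := qden ξ n * ξ - pnum ξ n

theorem abs_convErr_le (hξ : Irrational ξ) (n : ℕ) :
    |convErr ξ n| ≤ 1 / qden ξ (n + 1) := by
  have h := GenContFract.abs_sub_convs_le (not_terminatedAt_of_irrational hξ n)
  rw [GenContFract.conv_eq_num_div_den] at h
  have hq := qden_pos (ξ := ξ) n
  have e : convErr ξ n = qden ξ n * (ξ - pnum ξ n / qden ξ n) := by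
    rw [convErr]; field_simp
  rw [e, abs_mul, abs_of_pos hq]
  calc qden ξ n * |ξ - pnum ξ n / qden ξ n|
      ≤ qden ξ n * (1 / (qden ξ n * qden ξ (n + 1))) := by gcongr; exact h
    _ = 1 / qden ξ (n + 1) := by field_simp

theorem mul_abs_convErr_le (hξ : Irrational ξ) {n : ℕ} {M c : ℝ} (hM : 0 ≤ M)
    (h : M ≤ c * qden ξ n * qden ξ (n + 1)) : M * |convErr ξ n| ≤ c * qden ξ n :=
  calc M * |convErr ξ n| ≤ (c * qden ξ n * qden ξ (n + 1)) * (1 / qden ξ (n + 1)) :=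
        mul_le_mul h (abs_convErr_le hξ n) (abs_nonneg _) (hM.trans h)
    _ = c * qden ξ n := by field_simp [(qden_pos (ξ := ξ) (n + 1)).ne']

theorem convErr_ne_zero (hξ : Irrational ξ) (n : ℕ) : convErr ξ n ≠ 0 := by
  obtain ⟨p, hp⟩ := Subring.mem_bot.1 (pnum_mem_bot_and_qden_mem_bot hξ n).1
  obtain ⟨q, hq⟩ := Subring.mem_bot.1 (pnum_mem_bot_and_qden_mem_bot hξ n).2
  have hq0 : q ≠ 0 := by
    rintro rfl; simp [(qden_pos (ξ := ξ) n).ne] at hq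
  rw [convErr, ← hp, ← hq]
  exact ((hξ.intCast_mul hq0).sub_intCast p).ne_zero

theorem qden_succ_mul_convErr_sub (hξ : Irrational ξ) (n : ℕ) :
    qden ξ (n + 1) * convErr ξ n - qden ξ n * convErr ξ (n + 1) = -(-1) ^ (n + 1) := by
  rw [convErr, convErr, ← pnum_mul_qden_succ_sub hξ n]; ring

theorem convErr_mul_convErr_succ_neg (hξ : Irrational ξ) (n : ℕ) :
    convErr ξ n * convErr ξ (n + 1) < 0 := by
  have hq₀ := qden_pos (ξ := ξ) n
  have hq₁ := qden_pos (ξ := ξ) (n + 1)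
  have hx : |qden ξ (n + 1) * convErr ξ n| ≤ 1 := by
    rw [abs_mul, abs_of_pos hq₁]
    calc qden ξ (n + 1) * |convErr ξ n| ≤ qden ξ (n + 1) * (1 / qden ξ (n + 1)) := by
          gcongr; exact abs_convErr_le hξ n
      _ = 1 := by field_simp
  have hy : |qden ξ n * convErr ξ (n + 1)| < 1 := by
    rw [abs_mul, abs_of_pos hq₀]
    calc qden ξ n * |convErr ξ (n + 1)| ≤ qden ξ n * (1 / qden ξ (n + 2)) := by
          gcongr; exact abs_convErr_le hξ (n + 1)
      _ < 1 := by
          rw [mul_one_div, div_lt_one (qden_pos _)]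
          linarith [qden_add_qden_succ_le hξ n]
  have h := mul_neg_of_abs_sub_eq_one
    (by rw [qden_succ_mul_convErr_sub hξ n]; simp) hx hy
    (mul_ne_zero hq₀.ne' (convErr_ne_zero hξ (n + 1)))
  have e : qden ξ (n + 1) * convErr ξ n * (qden ξ n * convErr ξ (n + 1)) =
      (qden ξ (n + 1) * qden ξ n) * (convErr ξ n * convErr ξ (n + 1)) := by ring
  rw [e] at h
  exact neg_of_mul_neg_right h (by positivity)

theorem qden_succ_mul_abs_convErr_add (hξ : Irrational ξ) (n : ℕ) :
    qden ξ (n + 1) * |convErr ξ n| + qden ξ n * |convErr ξ (n + 1)| = 1 := by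
  have hq₀ := qden_pos (ξ := ξ) n
  have hq₁ := qden_pos (ξ := ξ) (n + 1)
  have hsign := convErr_mul_convErr_succ_neg hξ n
  have h := congrArg abs (qden_succ_mul_convErr_sub hξ n)
  rw [abs_neg, abs_pow, abs_neg, abs_one, one_pow, sub_eq_add_neg,
    (abs_add_eq_add_abs_iff _ _).2 ?_, abs_neg, abs_mul, abs_mul, abs_of_pos hq₀,
    abs_of_pos hq₁] at h
  · exact h
  rcases mul_neg_iff.1 hsign with ⟨h₀, h₁⟩ | ⟨h₀, h₁⟩
  · exact Or.inl ⟨by positivity, by nlinarith⟩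
  · exact Or.inr ⟨by nlinarith, by nlinarith⟩

theorem one_div_qden_add_le_abs_convErr (hξ : Irrational ξ) (n : ℕ) :
    1 / (qden ξ n + qden ξ (n + 1)) ≤ |convErr ξ n| := by
  have hq₀ := qden_pos (ξ := ξ) n
  have hq₁ := qden_pos (ξ := ξ) (n + 1)
  have h := qden_succ_mul_abs_convErr_add hξ n
  have hle : qden ξ n * |convErr ξ (n + 1)| ≤ qden ξ n / (qden ξ n + qden ξ (n + 1)) :=
    calc qden ξ n * |convErr ξ (n + 1)| ≤ qden ξ n * (1 / qden ξ (n + 2)) := by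
          gcongr; exact abs_convErr_le hξ (n + 1)
      _ ≤ qden ξ n / (qden ξ n + qden ξ (n + 1)) := by
          rw [mul_one_div]; gcongr; exact qden_add_qden_succ_le hξ n
  rw [div_le_iff₀ (by positivity)]
  rw [le_div_iff₀ (by positivity)] at hle
  nlinarith

-- The determinant is `±1`, so Cramer's rule gives integral coordinates.
theorem exists_int_eq_mul_qden_add (hξ : Irrational ξ) (n : ℕ) (P Q : ℤ) :
    ∃ u v : ℤ, (P : ℝ) = u * qden ξ n + v * qden ξ (n + 1) ∧
      (P : ℝ) * ξ + Q = u * convErr ξ n + v * convErr ξ (n + 1) := by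
  obtain ⟨p₀, hp₀⟩ := Subring.mem_bot.1 (pnum_mem_bot_and_qden_mem_bot hξ n).1
  obtain ⟨q₀, hq₀⟩ := Subring.mem_bot.1 (pnum_mem_bot_and_qden_mem_bot hξ n).2
  obtain ⟨p₁, hp₁⟩ := Subring.mem_bot.1 (pnum_mem_bot_and_qden_mem_bot hξ (n + 1)).1
  obtain ⟨q₁, hq₁⟩ := Subring.mem_bot.1 (pnum_mem_bot_and_qden_mem_bot hξ (n + 1)).2
  have hdet := pnum_mul_qden_succ_sub hξ n
  have hsq : ((-1 : ℝ) ^ (n + 1)) ^ 2 = 1 := by rw [← pow_mul, pow_mul', neg_one_sq, one_pow]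
  refine ⟨-(-1) ^ (n + 1) * (p₁ * P + q₁ * Q), (-1) ^ (n + 1) * (p₀ * P + q₀ * Q),
    ?_, ?_⟩
  all_goals
    simp only [convErr, ← hp₀, ← hq₀, ← hp₁, ← hq₁] at hdet ⊢
    push_cast
  · linear_combination (-(P : ℝ)) * hsq - (-1) ^ (n + 1) * P * hdet
  · linear_combination (-(P * ξ + Q : ℝ)) * hsq - (-1) ^ (n + 1) * (P * ξ + Q) * hdet

theorem abs_mul_abs_convErr_le (hξ : Irrational ξ) {n : ℕ} {P Q u v : ℤ}
    (hP : (P : ℝ) = u * qden ξ n + v * qden ξ (n + 1))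
    (hPQ : (P : ℝ) * ξ + Q = u * convErr ξ n + v * convErr ξ (n + 1))
    (hlt : |(P : ℝ)| < qden ξ n + qden ξ (n + 1)) :
    |(u : ℝ)| * |convErr ξ n| ≤ |(P : ℝ) * ξ + Q| := by
  have huv : (u : ℝ) * v ≤ 0 := by
    by_contra! h
    have := add_le_abs_mul_add_mul (mod_cast h : 0 < u * v)
      (qden_pos (ξ := ξ) n).le (qden_pos (ξ := ξ) (n + 1)).le
    rw [← hP] at this
    linarith
  rw [← abs_mul, hPQ]
  apply abs_le_abs_add_of_mul_nonneg
  have e : u * convErr ξ n * (v * convErr ξ (n + 1)) =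
      (u * v) * (convErr ξ n * convErr ξ (n + 1)) := by ring
  rw [e]
  exact mul_nonneg_of_nonpos_of_nonpos huv (convErr_mul_convErr_succ_neg hξ n).le

theorem abs_convErr_le_abs_mul_add (hξ : Irrational ξ) {n : ℕ} {P Q : ℤ}
    (hPQ : P ≠ 0 ∨ Q ≠ 0) (hP : |(P : ℝ)| < qden ξ (n + 1)) :
    |convErr ξ n| ≤ |(P : ℝ) * ξ + Q| := by
  obtain ⟨u, v, hPuv, hPQuv⟩ := exists_int_eq_mul_qden_add hξ n P Q
  have hu : u ≠ 0 := by
    rintro rfl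
    rcases eq_or_ne v 0 with rfl | hv
    · simp only [Int.cast_zero, zero_mul, add_zero, Int.cast_eq_zero] at hPuv hPQuv
      simp [hPuv] at hPQuv
      tauto
    · have : qden ξ (n + 1) ≤ |(P : ℝ)| := by
        rw [hPuv, Int.cast_zero, zero_mul, zero_add, abs_mul, abs_of_pos (qden_pos _)]
        exact le_mul_of_one_le_left (qden_pos _).le (mod_cast Int.one_le_abs hv)
      linarith
  calc |convErr ξ n| ≤ |(u : ℝ)| * |convErr ξ n| :=
        le_mul_of_one_le_left (abs_nonneg _) (mod_cast Int.one_le_abs hu)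
    _ ≤ |(P : ℝ) * ξ + Q| :=
        abs_mul_abs_convErr_le hξ hPuv hPQuv (by linarith [qden_pos (ξ := ξ) n])

theorem one_div_two_mul_qden_le_abs_mul_add (hξ : Irrational ξ) {n : ℕ} {P Q : ℤ}
    (hPQ : P ≠ 0 ∨ Q ≠ 0) (hP : |(P : ℝ)| < qden ξ n) :
    1 / (2 * qden ξ n) ≤ |(P : ℝ) * ξ + Q| := by
  cases n with
  | zero =>
    rw [qden_zero] at hP ⊢
    have hP0 : P = 0 := by
      rw [← Int.cast_abs] at hP
      exact abs_eq_zero.1 (le_antisymm (Int.lt_add_one_iff.1 (mod_cast hP)) (abs_nonneg P))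
    have hQ : (1 : ℝ) ≤ |(Q : ℝ)| :=
      mod_cast Int.one_le_abs (hPQ.resolve_left (not_not.2 hP0))
    rw [hP0, Int.cast_zero, zero_mul, zero_add]
    linarith
  | succ m =>
    calc 1 / (2 * qden ξ (m + 1)) ≤ 1 / (qden ξ m + qden ξ (m + 1)) :=
          one_div_le_one_div_of_le
            (by linarith [qden_pos (ξ := ξ) m, qden_pos (ξ := ξ) (m + 1)])
            (by linarith [qden_monotone (ξ := ξ) m.le_succ])
      _ ≤ |convErr ξ m| := one_div_qden_add_le_abs_convErr hξ m
      _ ≤ |(P : ℝ) * ξ + Q| := abs_convErr_le_abs_mul_add hξ hPQ hP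

theorem exists_eq_mul_convergent (hξ : Irrational ξ) {n : ℕ} {P Q : ℤ} (hP : P ≠ 0)
    (hlt : qden ξ n + 2 * |(P : ℝ)| < qden ξ (n + 1))
    (hPQ : |(P : ℝ) * ξ + Q| ≤ 1 / (2 * qden ξ n)) :
    ∃ u : ℤ, u ≠ 0 ∧ (P : ℝ) = u * qden ξ n ∧ (Q : ℝ) = -(u * pnum ξ n) := by
  obtain ⟨u, v, hPuv, hPQuv⟩ := exists_int_eq_mul_qden_add hξ n P Q
  have hq₀ := qden_pos (ξ := ξ) n
  have hu := abs_mul_abs_convErr_le hξ hPuv hPQuv (by linarith [abs_nonneg (P : ℝ)])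
  rcases eq_or_ne v 0 with rfl | hv
  · simp only [Int.cast_zero, zero_mul, add_zero] at hPuv hPQuv
    refine ⟨u, by rintro rfl; simp_all, hPuv, ?_⟩
    rw [convErr, hPuv] at hPQuv
    linarith
  exfalso
  have hv_le : qden ξ (n + 1) ≤ |(P : ℝ)| + |(u : ℝ)| * qden ξ n := by
    have h1 : qden ξ (n + 1) ≤ |(v : ℝ) * qden ξ (n + 1)| := by
      rw [abs_mul, abs_of_pos (qden_pos _)]
      exact le_mul_of_one_le_left (qden_pos _).le (mod_cast Int.one_le_abs hv)
    have h2 : (v : ℝ) * qden ξ (n + 1) = P - u * qden ξ n := by rw [hPuv]; ring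
    rw [h2] at h1
    calc qden ξ (n + 1) ≤ |(P : ℝ) - u * qden ξ n| := h1
      _ ≤ |(P : ℝ)| + |(u : ℝ) * qden ξ n| := abs_sub _ _
      _ = |(P : ℝ)| + |(u : ℝ)| * qden ξ n := by rw [abs_mul, abs_of_pos hq₀]
  have hθ := one_div_qden_add_le_abs_convErr hξ n
  rw [div_le_iff₀ (by linarith [qden_pos (ξ := ξ) (n + 1)])] at hθ
  rw [le_div_iff₀ (by positivity)] at hPQ
  have ht : 0 < |convErr ξ n| := abs_pos.2 (convErr_ne_zero hξ n)
  have h1 : (qden ξ (n + 1) - |(P : ℝ)|) * |convErr ξ n| ≤ qden ξ n * |(P : ℝ) * ξ + Q| :=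
    calc (qden ξ (n + 1) - |(P : ℝ)|) * |convErr ξ n|
        ≤ (|(u : ℝ)| * qden ξ n) * |convErr ξ n| := by gcongr; linarith
      _ = qden ξ n * (|(u : ℝ)| * |convErr ξ n|) := by ring
      _ ≤ qden ξ n * |(P : ℝ) * ξ + Q| := by gcongr
  nlinarith

end ContinuedFraction

section MatrixAction

variable {γ : Matrix (Fin 2) (Fin 2) ℤ} {ξ : ℝ} {y : Fin 2 → ℝ} {a b : ℤ}

theorem act_sub_apply (γ : Matrix (Fin 2) (Fin 2) ℤ) (ξ : ℝ) (y : Fin 2 → ℝ) (i : Fin 2) :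
    (act γ ![ξ, 1] - y) i = γ i 0 * ξ + γ i 1 - y i := by
  fin_cases i <;> simp [act]

theorem abs_apply_le_vnorm (v : Fin 2 → ℝ) (i : Fin 2) : |v i| ≤ vnorm v := by
  fin_cases i
  exacts [le_max_left _ _, le_max_right _ _]

theorem abs_apply_le_mnorm (γ : Matrix (Fin 2) (Fin 2) ℤ) (i j : Fin 2) :
    |(γ i j : ℝ)| ≤ mnorm γ := by
  fin_cases i <;> fin_cases j
  exacts [(le_max_left _ _).trans (le_max_left _ _), (le_max_right _ _).trans (le_max_left _ _),
    (le_max_left _ _).trans (le_max_right _ _), (le_max_right _ _).trans (le_max_right _ _)]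

theorem mnorm_nonneg (γ : Matrix (Fin 2) (Fin 2) ℤ) : 0 ≤ mnorm γ :=
  (abs_nonneg _).trans (abs_apply_le_mnorm γ 0 0)

def rowComb (γ : Matrix (Fin 2) (Fin 2) ℤ) (a b : ℤ) : Fin 2 → ℤ := vecMul ![b, -a] γ

theorem rowComb_apply (γ : Matrix (Fin 2) (Fin 2) ℤ) (a b : ℤ) (j : Fin 2) :
    rowComb γ a b j = b * γ 0 j - a * γ 1 j := by
  simp [rowComb, vecMul, dotProduct, Fin.sum_univ_two]; ring

theorem mul_rowComb_sub (hγ : γ.det = 1) :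
    γ 1 1 * rowComb γ a b 0 - γ 1 0 * rowComb γ a b 1 = b := by
  rw [det_fin_two] at hγ
  simp only [rowComb_apply]
  linear_combination b * hγ

theorem rowComb_ne_zero (hγ : γ.det = 1) (hb : b ≠ 0) :
    rowComb γ a b 0 ≠ 0 ∨ rowComb γ a b 1 ≠ 0 := by
  by_contra! h
  have := mul_rowComb_sub (a := a) (b := b) hγ
  simp only [h.1, h.2, mul_zero, sub_zero] at this
  exact hb this.symm

theorem abs_rowComb_mul_add_le (hab : |a| ≤ b) (hslope : y 0 * b = y 1 * a) :
    |(rowComb γ a b 0 : ℝ) * ξ + rowComb γ a b 1| ≤ 2 * b * vnorm (act γ ![ξ, 1] - y) := by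
  set e := act γ ![ξ, 1] - y
  have hab' : |(a : ℝ)| ≤ b := mod_cast hab
  have hb : (0 : ℝ) ≤ b := (abs_nonneg _).trans hab'
  have key : (rowComb γ a b 0 : ℝ) * ξ + rowComb γ a b 1 = b * e 0 - a * e 1 := by
    simp only [rowComb_apply, e, act_sub_apply]; push_cast; linear_combination hslope
  rw [key]
  calc |(b : ℝ) * e 0 - a * e 1| ≤ |(b : ℝ)| * |e 0| + |(a : ℝ)| * |e 1| := by
        rw [← abs_mul, ← abs_mul]; exact abs_sub _ _
    _ ≤ b * vnorm e + b * vnorm e := by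
        rw [abs_of_nonneg hb]
        gcongr
        exacts [abs_apply_le_vnorm e 0, abs_apply_le_vnorm e 1]
    _ = 2 * b * vnorm e := by ring

theorem abs_mul_abs_rowComb_le (hγ : γ.det = 1) (hb : 0 ≤ b) (hslope : y 0 * b = y 1 * a) :
    |y 1| * |(rowComb γ a b 0 : ℝ)| ≤
      b * (1 + 2 * mnorm γ * vnorm (act γ ![ξ, 1] - y)) := by
  set e := act γ ![ξ, 1] - y
  have hdet : (γ 0 0 * γ 1 1 - γ 0 1 * γ 1 0 : ℝ) = 1 := by
    rw [det_fin_two] at hγ; exact_mod_cast hγ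
  have key : y 1 * (rowComb γ a b 0 : ℝ) = b * (1 - (γ 0 0 * e 1 - γ 1 0 * e 0)) := by
    simp only [rowComb_apply, e, act_sub_apply]; push_cast
    linear_combination (b : ℝ) * hdet + γ 1 0 * hslope
  rw [← abs_mul, key, abs_mul, abs_of_nonneg (mod_cast hb : (0 : ℝ) ≤ b)]
  gcongr
  have := mnorm_nonneg γ
  calc |1 - (γ 0 0 * e 1 - γ 1 0 * e 0)|
        ≤ 1 + (|(γ 0 0 : ℝ)| * |e 1| + |(γ 1 0 : ℝ)| * |e 0|) := by
        rw [← abs_mul, ← abs_mul]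
        exact (abs_sub _ _).trans (by rw [abs_one]; gcongr; exact abs_sub _ _)
    _ ≤ 1 + (mnorm γ * vnorm e + mnorm γ * vnorm e) := by
        gcongr
        exacts [abs_apply_le_mnorm γ 0 0, abs_apply_le_vnorm e 1, abs_apply_le_mnorm γ 1 0,
          abs_apply_le_vnorm e 0]
    _ = 1 + 2 * mnorm γ * vnorm e := by ring

theorem three_mul_abs_rowComb_lt (hγ : γ.det = 1) (hb : 0 < b) (hslope : y 0 * b = y 1 * a)
    {q q' : ℝ} (hq : 0 < q) (hqq' : q ≤ q') (h12 : 12 * b ≤ |y 1| * q)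
    (hγq : mnorm γ ≤ |y 1| / 4 * q * q') (hδ : 4 * b * q * vnorm (act γ ![ξ, 1] - y) < 1) :
    3 * |(rowComb γ a b 0 : ℝ)| < q' := by
  set δ := vnorm (act γ ![ξ, 1] - y)
  have hb' : (0 : ℝ) < b := mod_cast hb
  have hy : 0 < |y 1| := pos_of_mul_pos_left (h12.trans_lt' (by positivity)) hq.le
  have hP := abs_mul_abs_rowComb_le (ξ := ξ) hγ hb.le hslope
  have hδ₀ : 0 ≤ δ := (abs_nonneg _).trans (abs_apply_le_vnorm _ 0)
  have hγδ : 2 * b * mnorm γ * δ ≤ |y 1| * q' / 8 * (4 * b * q * δ) :=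
    calc 2 * b * mnorm γ * δ ≤ 2 * b * (|y 1| / 4 * q * q') * δ := by gcongr
      _ = |y 1| * q' / 8 * (4 * b * q * δ) := by ring
  have : |y 1| * (24 * |(rowComb γ a b 0 : ℝ)|) < |y 1| * (5 * q') := by
    nlinarith [mul_pos hy (hq.trans_le hqq')]
  linarith [lt_of_mul_lt_mul_left this hy.le]

theorem abs_mul_le_of_rowComb_eq (hγ : γ.det = 1) (hb : 0 ≤ b) {u p q : ℝ} (hu : 1 ≤ |u|)
    (hq : 0 ≤ q) (hP : (rowComb γ a b 0 : ℝ) = u * q)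
    (hQ : (rowComb γ a b 1 : ℝ) = -(u * p)) :
    |y 1| * q ≤ b + q * vnorm (act γ ![ξ, 1] - y) + mnorm γ * |q * ξ - p| := by
  set e := act γ ![ξ, 1] - y
  have hb' : (0 : ℝ) ≤ b := mod_cast hb
  have hrow : u * (γ 1 0 * p + γ 1 1 * q) = b := by
    have := congrArg (Int.cast : ℤ → ℝ) (mul_rowComb_sub (a := a) (b := b) hγ)
    push_cast at this
    rw [hP, hQ] at this
    linear_combination this
  have hrow' : |(γ 1 0 * p + γ 1 1 * q : ℝ)| ≤ b := by
    have h := congrArg abs hrow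
    rw [abs_mul, abs_of_nonneg hb'] at h
    nlinarith [abs_nonneg (γ 1 0 * p + γ 1 1 * q : ℝ)]
  have key : q * y 1 = (γ 1 0 * p + γ 1 1 * q) - q * e 1 + γ 1 0 * (q * ξ - p) := by
    simp only [e, act_sub_apply]; ring
  calc |y 1| * q = |q * y 1| := by rw [abs_mul, abs_of_nonneg hq, mul_comm]
    _ ≤ |(γ 1 0 * p + γ 1 1 * q : ℝ)| + |q * e 1| + |(γ 1 0 : ℝ) * (q * ξ - p)| := by
        rw [key]; exact (abs_add_le _ _).trans (by gcongr; exact abs_sub _ _)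
    _ ≤ b + q * vnorm e + mnorm γ * |q * ξ - p| := by
        rw [abs_mul, abs_mul, abs_of_nonneg hq]
        gcongr
        exacts [abs_apply_le_vnorm e 1, abs_apply_le_mnorm γ 1 0]

end MatrixAction

theorem stmt16_general (ξ : ℝ) (hξ : Irrational ξ) (y : Fin 2 → ℝ) (hy2 : y 1 ≠ 0)
    (a b : ℤ) (hb : 0 < b) (hab' : |a| ≤ b)
    (hslope : y 0 * (b : ℝ) = y 1 * (a : ℝ))
    (k : ℕ) (hqk : 12 * (b : ℝ) / |y 1| ≤ qden ξ k)
    (γ : Matrix (Fin 2) (Fin 2) ℤ) (hγ : γ.det = 1)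
    (hn : mnorm γ ≤ (|y 1| / 4) * qden ξ k * qden ξ (k + 1)) :
    1 / (4 * (b : ℝ) * qden ξ k) ≤ vnorm (act γ ![ξ, 1] - y) := by
  by_contra! hδ
  set δ := vnorm (act γ ![ξ, 1] - y)
  set P := rowComb γ a b 0
  have hq := qden_pos (ξ := ξ) k
  have hb₁ : (1 : ℝ) ≤ b := by exact_mod_cast hb
  have h12 : 12 * b ≤ |y 1| * qden ξ k := by rw [div_le_iff₀ (abs_pos.2 hy2)] at hqk; linarith
  have hδ' : 4 * b * qden ξ k * δ < 1 := by rwa [lt_div_iff₀ (by positivity), mul_comm] at hδ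
  have hPQ : |(P : ℝ) * ξ + rowComb γ a b 1| < 1 / (2 * qden ξ k) := by
    rw [lt_div_iff₀ (by positivity)]
    nlinarith [abs_rowComb_mul_add_le (γ := γ) (ξ := ξ) hab' hslope]
  have hP₀ : qden ξ k ≤ |(P : ℝ)| := by
    by_contra! h
    exact (one_div_two_mul_qden_le_abs_mul_add hξ (rowComb_ne_zero hγ hb.ne') h).not_gt hPQ
  have hP₁ := three_mul_abs_rowComb_lt hγ hb hslope hq (qden_monotone k.le_succ) h12 hn hδ'
  obtain ⟨u, hu, hPu, hQu⟩ := exists_eq_mul_convergent hξ (P := P)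
    (by rintro h; simp [h] at hP₀; linarith) (by linarith) hPQ.le
  have hrow := abs_mul_le_of_rowComb_eq (ξ := ξ) (y := y) hγ hb.le
    (mod_cast Int.one_le_abs hu) hq.le hPu hQu
  have hγθ := mul_abs_convErr_le hξ (mnorm_nonneg γ) hn
  rw [convErr] at hγθ
  have : qden ξ k * δ < 1 / 4 := by nlinarith
  linarith

/-- Theorem 4: if `q_k ≥ 12 b / |y₂|`, then every `γ ∈ SL(2, ℤ)` with
`|γ| ≤ (|y₂|/4) q_k q_{k+1}` satisfies `|γ (ξ, 1)ᵀ - y| ≥ 1/(4 b q_k)`. -/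
theorem stmt16 (ξ : ℝ) (hξ : Irrational ξ) (y : Fin 2 → ℝ) (hy2 : y 1 ≠ 0)
    (a b : ℤ) (hab : IsCoprime a b) (hb : 0 < b) (hab' : |a| ≤ b)
    (hslope : y 0 * (b : ℝ) = y 1 * (a : ℝ))
    (k : ℕ) (hk : 1 ≤ k) (hqk : 12 * (b : ℝ) / |y 1| ≤ qden ξ k)
    (γ : Matrix (Fin 2) (Fin 2) ℤ) (hγ : γ.det = 1)
    (hn : mnorm γ ≤ (|y 1| / 4) * qden ξ k * qden ξ (k + 1)) :
    1 / (4 * (b : ℝ) * qden ξ k) ≤ vnorm (act γ ![ξ, 1] - y) :=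
  stmt16_general ξ hξ y hy2 a b hb hab' hslope k hqk γ hγ hn
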